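/- Let (ν⁽ˡ⁾(X))_{l=0}^{L} be a sequence of Bochner-integrable random vectors in ℝ^p with ν⁽⁰⁾(X) = 0 that is a weak martingale, i.e. E[ ν⁽ⁱ⁾(X) | σ(ν⁽ʲ⁾(X)) ] = ν⁽ʲ⁾(X) almost surely whenever j < i. Suppose ‖ν⁽ˡ⁾(X) − ν⁽ˡ⁻¹⁾(X)‖₂ ≤ M almost surely for every l ∈ {1,…,L}, with M > 0. Then for every l ∈ {1,…,L} and every a > 0, P( ‖ν⁽ˡ⁾(X)‖₂ ≥ M·a ) < 2·exp( 1 − (a−1)²/(2l) ). -/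

import Mathlib

/-!
The argument is Pinelis's exponential-moment bound for martingales with bounded increments in a
Hilbert space. Writing `b = ‖x‖` and `q = ⟪x, d⟫` with `‖d‖ ≤ M`, the number
`‖x + d‖² ≤ b² + 2q + M²` is a convex combination of `(b - M)²` and `(b + M)²`, so convexity of
`t ↦ cosh (c √t)` gives `cosh (c‖x + d‖) ≤ cosh (c‖x‖) cosh (cM) + ⟪v x, d⟫` for an explicit
vector field `v`. Along the layers, `v (ν k)` is `σ(ν k)`-measurable while the increment
`ν (k + 1) - ν k` has conditional mean zero given `σ(ν k)`, so the inner product integrates to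
zero and `E cosh (c‖ν l‖) ≤ cosh (cM) ^ l ≤ exp (l c² M² / 2)`. Markov's inequality for
`cosh (c‖ν l‖)` with `c = a / (l M)` yields `P(‖ν l‖ ≥ M a) ≤ 2 exp (-a² / (2l))`, which is smaller
than the stated bound.
-/

open MeasureTheory Real

lemma convexOn_cosh_mul_sqrt (c : ℝ) : ConvexOn ℝ (Set.Ici 0) fun t => cosh (c * √t) := by
  have hasSum_cosh_mul_sqrt {t : ℝ} (ht : 0 ≤ t) :
      HasSum (fun n => (c ^ 2 * t) ^ n / ((2 * n).factorial : ℝ)) (cosh (c * √t)) := by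
    convert hasSum_cosh (c * √t) using 2 with n
    rw [pow_mul, mul_pow c √t 2, sq_sqrt ht]
  refine ⟨convex_Ici 0, fun t₀ (h₀ : 0 ≤ t₀) t₁ (h₁ : 0 ≤ t₁) θ₀ θ₁ hθ₀ hθ₁ hθ => ?_⟩
  refine hasSum_le (fun n => ?_) (hasSum_cosh_mul_sqrt (by positivity))
    (((hasSum_cosh_mul_sqrt h₀).mul_left θ₀).add ((hasSum_cosh_mul_sqrt h₁).mul_left θ₁))
  have hpow := (convexOn_pow n).2 (Set.mem_Ici.2 (by positivity : 0 ≤ c ^ 2 * t₀))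
    (Set.mem_Ici.2 (by positivity : 0 ≤ c ^ 2 * t₁)) hθ₀ hθ₁ hθ
  simp only [smul_eq_mul] at hpow ⊢
  calc (c ^ 2 * (θ₀ * t₀ + θ₁ * t₁)) ^ n / ((2 * n).factorial : ℝ)
      = (θ₀ * (c ^ 2 * t₀) + θ₁ * (c ^ 2 * t₁)) ^ n / ((2 * n).factorial : ℝ) := by ring_nf
    _ ≤ (θ₀ * (c ^ 2 * t₀) ^ n + θ₁ * (c ^ 2 * t₁) ^ n) / ((2 * n).factorial : ℝ) := by gcongr
    _ = _ := by ring

lemma cosh_mul_sqrt_le {c b M q : ℝ} (hb : 0 < b) (hM : 0 < M) (hq : |q| ≤ b * M) :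
    cosh (c * √(b ^ 2 + 2 * q + M ^ 2)) ≤
      cosh (c * b) * cosh (c * M) + q * (sinh (c * b) * sinh (c * M) / (b * M)) := by
  have hbM : 0 < b * M := mul_pos hb hM
  set θ := (b * M + q) / (2 * (b * M)) with hθ
  have hθ₀ : 0 ≤ θ := div_nonneg (by linarith [neg_abs_le q]) (by positivity)
  have hθ₁ : 0 ≤ 1 - θ := by
    rw [sub_nonneg, div_le_one (by positivity)]
    linarith [le_abs_self q]
  have hcomb : (1 - θ) * (b - M) ^ 2 + θ * (b + M) ^ 2 = b ^ 2 + 2 * q + M ^ 2 := by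
    rw [hθ]; field_simp; ring
  have hconv := (convexOn_cosh_mul_sqrt c).2 (Set.mem_Ici.2 (sq_nonneg (b - M)))
    (Set.mem_Ici.2 (sq_nonneg (b + M))) hθ₁ hθ₀ (by ring)
  simp only [smul_eq_mul, hcomb] at hconv
  have hleft : cosh (c * √((b - M) ^ 2)) = cosh (c * (b - M)) := by
    rw [sqrt_sq_eq_abs, ← cosh_abs, abs_mul, abs_abs, ← abs_mul, cosh_abs]
  rw [hleft, sqrt_sq (by positivity)] at hconv
  refine hconv.trans_eq ?_
  rw [mul_sub, mul_add, cosh_sub, cosh_add, hθ]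
  field_simp
  ring

section Drift

variable {E : Type*} [NormedAddCommGroup E] [InnerProductSpace ℝ E]

/-- `sinh (c M) / (c M)` times the gradient of `cosh (c ‖·‖)` at `x`. At `x = 0` the coefficient
is the junk value `0 / 0 = 0`, which is harmless since it multiplies `x = 0`. -/
noncomputable def coshNormDrift (c M : ℝ) (x : E) : E :=
  (sinh (c * ‖x‖) * sinh (c * M) / (‖x‖ * M)) • x

lemma cosh_norm_add_le (c : ℝ) {M : ℝ} (hM : 0 < M) (x d : E) (hd : ‖d‖ ≤ M) :
    cosh (c * ‖x + d‖) ≤ cosh (c * ‖x‖) * cosh (c * M) + inner ℝ (coshNormDrift c M x) d := by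
  rcases eq_or_ne x 0 with rfl | hx
  · simpa [coshNormDrift, cosh_le_cosh, abs_mul] using
      mul_le_mul_of_nonneg_left (hd.trans (le_abs_self M)) (abs_nonneg c)
  have hb : 0 < ‖x‖ := norm_pos_iff.2 hx
  have hq : |inner ℝ x d| ≤ ‖x‖ * M :=
    (abs_real_inner_le_norm x d).trans (mul_le_mul_of_nonneg_left hd hb.le)
  have hsq : ‖x + d‖ ≤ √(‖x‖ ^ 2 + 2 * inner ℝ x d + M ^ 2) := by
    refine le_sqrt_of_sq_le ?_
    rw [norm_add_sq_real]
    gcongr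
  calc cosh (c * ‖x + d‖) ≤ cosh (c * √(‖x‖ ^ 2 + 2 * inner ℝ x d + M ^ 2)) := by
        rw [cosh_le_cosh, abs_mul, abs_mul]
        gcongr
    _ ≤ _ := cosh_mul_sqrt_le hb hM hq
    _ = _ := by rw [coshNormDrift, real_inner_smul_left, mul_comm (inner ℝ x d)]

lemma norm_coshNormDrift_le (c : ℝ) {M R : ℝ} (hM : 0 < M) {x : E} (hx : ‖x‖ ≤ R) :
    ‖coshNormDrift c M x‖ ≤ cosh (c * R) * |sinh (c * M)| / M := by
  rcases eq_or_ne x 0 with rfl | hx0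
  · simp only [coshNormDrift, smul_zero, norm_zero]
    positivity
  have hb : 0 < ‖x‖ := norm_pos_iff.2 hx0
  have hsinh : |sinh (c * ‖x‖)| ≤ cosh (c * R) := by
    rw [abs_sinh]
    refine (sinh_lt_cosh _).le.trans ?_
    rw [cosh_le_cosh, abs_abs, abs_mul, abs_mul, abs_of_pos hb]
    exact mul_le_mul_of_nonneg_left (hx.trans (le_abs_self R)) (abs_nonneg c)
  calc ‖coshNormDrift c M x‖ = |sinh (c * ‖x‖)| * |sinh (c * M)| / M := by
        rw [coshNormDrift, norm_smul, norm_div, norm_mul, Real.norm_eq_abs, Real.norm_eq_abs,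
          norm_mul, norm_norm, Real.norm_eq_abs, abs_of_pos hM]
        field_simp
    _ ≤ _ := by gcongr

lemma measurable_coshNormDrift [MeasurableSpace E] [BorelSpace E] [SecondCountableTopology E]
    (c M : ℝ) : Measurable (coshNormDrift c M : E → E) := by
  unfold coshNormDrift
  fun_prop

end Drift

section Martingale

variable {Ω : Type*} {mΩ : MeasurableSpace Ω} {μ : Measure Ω} {E : Type*} [NormedAddCommGroup E]

lemma integrable_cosh_mul_norm [IsFiniteMeasure μ] (c : ℝ) {R : ℝ} {f : Ω → E}
    (hf : AEStronglyMeasurable f μ) (hR : ∀ᵐ ω ∂μ, ‖f ω‖ ≤ R) :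
    Integrable (fun ω => cosh (c * ‖f ω‖)) μ := by
  refine Integrable.of_bound (by fun_prop) (cosh (c * R)) ?_
  filter_upwards [hR] with ω hω
  rw [Real.norm_eq_abs, abs_of_pos (cosh_pos _), cosh_le_cosh, abs_mul, abs_mul,
    abs_of_nonneg (norm_nonneg _)]
  exact mul_le_mul_of_nonneg_left (hω.trans (le_abs_self R)) (abs_nonneg c)

lemma ae_norm_le_mul_of_norm_sub_le {ν : ℕ → Ω → E} (h0 : ν 0 = 0) {M : ℝ} {n : ℕ}
    (hinc : ∀ k < n, ∀ᵐ ω ∂μ, ‖ν (k + 1) ω - ν k ω‖ ≤ M) :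
    ∀ᵐ ω ∂μ, ‖ν n ω‖ ≤ n * M := by
  induction n with
  | zero => simp [h0]
  | succ n ih =>
    filter_upwards [ih fun k hk => hinc k (by omega), hinc n n.lt_succ_self] with ω hn hstep
    calc ‖ν (n + 1) ω‖ = ‖ν n ω + (ν (n + 1) ω - ν n ω)‖ := by rw [add_sub_cancel]
      _ ≤ n * M + M := (norm_add_le _ _).trans (add_le_add hn hstep)
      _ = (n + 1 : ℕ) * M := by push_cast; ring

lemma mul_measureReal_le_norm_le_integral_cosh {c : ℝ} (hc : 0 < c) {r : ℝ} (hr : 0 ≤ r)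
    {f : Ω → E} (hf : Integrable (fun ω => cosh (c * ‖f ω‖)) μ) :
    cosh (c * r) * μ.real {ω | r ≤ ‖f ω‖} ≤ ∫ ω, cosh (c * ‖f ω‖) ∂μ := by
  have hset : {ω | r ≤ ‖f ω‖} = {ω | cosh (c * r) ≤ cosh (c * ‖f ω‖)} := by
    ext ω
    simp only [Set.mem_ofPred_eq, cosh_le_cosh, abs_mul, abs_of_pos hc, abs_of_nonneg hr,
      abs_norm, mul_le_mul_iff_right₀ hc]
  rw [hset]
  exact mul_meas_ge_le_integral_of_nonneg (ae_of_all _ fun ω => (cosh_pos _).le) hf _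

variable [InnerProductSpace ℝ E]

lemma integral_inner_eq_zero_of_condExp_eq_zero [CompleteSpace E] {m : MeasurableSpace Ω}
    (hm : m ≤ mΩ) [SigmaFinite (μ.trim hm)] {G D : Ω → E} (hG : StronglyMeasurable[m] G)
    (hGD : Integrable (fun ω => inner ℝ (G ω) (D ω)) μ) (hD : Integrable D μ)
    (hDm : μ[D | m] =ᵐ[μ] 0) :
    ∫ ω, inner ℝ (G ω) (D ω) ∂μ = 0 := by
  have hpull : μ[fun ω => inner ℝ (G ω) (D ω) | m] =ᵐ[μ] fun ω => inner ℝ (G ω) (μ[D | m] ω) :=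
    condExp_bilin_of_stronglyMeasurable_left (innerSL ℝ) hG hGD hD
  calc ∫ ω, inner ℝ (G ω) (D ω) ∂μ = ∫ ω, (μ[fun ω => inner ℝ (G ω) (D ω) | m]) ω ∂μ :=
        (integral_condExp hm).symm
    _ = ∫ ω, inner ℝ (G ω) ((μ[D | m]) ω) ∂μ := integral_congr_ae hpull
    _ = 0 := by
        rw [integral_congr_ae (g := 0) (hDm.mono fun ω h => by simp [h])]
        simp

lemma integral_cosh_norm_le_of_condExp_eq [CompleteSpace E] [MeasurableSpace E] [BorelSpace E]
    [SecondCountableTopology E] [IsFiniteMeasure μ] (c : ℝ) {M R : ℝ} (hM : 0 < M) {X Y : Ω → E}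
    (hX : Measurable X) (hXi : Integrable X μ) (hYi : Integrable Y μ)
    (hXY : μ[Y | MeasurableSpace.comap X inferInstance] =ᵐ[μ] X)
    (hXR : ∀ᵐ ω ∂μ, ‖X ω‖ ≤ R) (hYX : ∀ᵐ ω ∂μ, ‖Y ω - X ω‖ ≤ M) :
    ∫ ω, cosh (c * ‖Y ω‖) ∂μ ≤ cosh (c * M) * ∫ ω, cosh (c * ‖X ω‖) ∂μ := by
  set m := MeasurableSpace.comap X inferInstance
  have hm : m ≤ mΩ := hX.comap_le
  have hXm : Measurable[m] X := Measurable.of_comap_le le_rfl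
  have hcentered : μ[Y - X | m] =ᵐ[μ] 0 := by
    filter_upwards [condExp_sub hYi hXi m, hXY] with ω hsub hY
    rw [hsub, Pi.sub_apply, hY, condExp_of_stronglyMeasurable hm hXm.stronglyMeasurable hXi,
      sub_self, Pi.zero_apply]
  set G := fun ω => coshNormDrift c M (X ω)
  have hG : StronglyMeasurable[m] G :=
    ((measurable_coshNormDrift c M).comp hXm).stronglyMeasurable
  have hGD : Integrable (fun ω => inner ℝ (G ω) (Y ω - X ω)) μ := by
    refine Integrable.of_bound ((hG.mono hm).aestronglyMeasurable.inner
      (hYi.sub hXi).aestronglyMeasurable) (cosh (c * R) * |sinh (c * M)| / M * M) ?_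
    filter_upwards [hXR, hYX] with ω hXω hYXω
    refine (norm_inner_le_norm _ _).trans (mul_le_mul (norm_coshNormDrift_le c hM hXω) hYXω
      (norm_nonneg _) (by positivity))
  have hYR : ∀ᵐ ω ∂μ, ‖Y ω‖ ≤ R + M := by
    filter_upwards [hXR, hYX] with ω hXω hYXω
    calc ‖Y ω‖ = ‖X ω + (Y ω - X ω)‖ := by rw [add_sub_cancel]
      _ ≤ R + M := (norm_add_le _ _).trans (add_le_add hXω hYXω)
  have hXcosh := integrable_cosh_mul_norm c hXi.aestronglyMeasurable hXR
  have hpointwise : ∀ᵐ ω ∂μ, cosh (c * ‖Y ω‖) ≤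
      cosh (c * ‖X ω‖) * cosh (c * M) + inner ℝ (G ω) (Y ω - X ω) := by
    filter_upwards [hYX] with ω hω
    simpa using cosh_norm_add_le c hM (X ω) (Y ω - X ω) hω
  calc ∫ ω, cosh (c * ‖Y ω‖) ∂μ
      ≤ ∫ ω, (cosh (c * ‖X ω‖) * cosh (c * M) + inner ℝ (G ω) (Y ω - X ω)) ∂μ :=
        integral_mono_ae (integrable_cosh_mul_norm c hYi.aestronglyMeasurable hYR)
          ((hXcosh.mul_const _).add hGD) hpointwise
    _ = cosh (c * M) * ∫ ω, cosh (c * ‖X ω‖) ∂μ := by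
        rw [integral_add (hXcosh.mul_const _) hGD, integral_mul_const,
          integral_inner_eq_zero_of_condExp_eq_zero hm hG hGD (hYi.sub hXi) hcentered, add_zero,
          mul_comm]

lemma integral_cosh_norm_le_pow [CompleteSpace E] [MeasurableSpace E] [BorelSpace E]
    [SecondCountableTopology E] [IsProbabilityMeasure μ] (c : ℝ) {M : ℝ} (hM : 0 < M)
    {ν : ℕ → Ω → E} (h0 : ν 0 = 0) (hmeas : ∀ k, Measurable (ν k))
    (hint : ∀ k, Integrable (ν k) μ) {n : ℕ}
    (hmart : ∀ k < n, μ[ν (k + 1) | MeasurableSpace.comap (ν k) inferInstance] =ᵐ[μ] ν k)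
    (hinc : ∀ k < n, ∀ᵐ ω ∂μ, ‖ν (k + 1) ω - ν k ω‖ ≤ M) :
    ∫ ω, cosh (c * ‖ν n ω‖) ∂μ ≤ cosh (c * M) ^ n := by
  induction n with
  | zero => simp [h0]
  | succ n ih =>
    have hprev : ∀ k < n, ∀ᵐ ω ∂μ, ‖ν (k + 1) ω - ν k ω‖ ≤ M := fun k hk => hinc k (by omega)
    calc ∫ ω, cosh (c * ‖ν (n + 1) ω‖) ∂μ ≤ cosh (c * M) * ∫ ω, cosh (c * ‖ν n ω‖) ∂μ :=
          integral_cosh_norm_le_of_condExp_eq c hM (hmeas n) (hint n) (hint (n + 1))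
            (hmart n n.lt_succ_self) (ae_norm_le_mul_of_norm_sub_le h0 hprev)
            (hinc n n.lt_succ_self)
      _ ≤ cosh (c * M) * cosh (c * M) ^ n :=
          mul_le_mul_of_nonneg_left (ih (fun k hk => hmart k (by omega)) hprev) (cosh_pos _).le
      _ = cosh (c * M) ^ (n + 1) := (pow_succ' _ _).symm

lemma measureReal_le_norm_le_two_mul_exp [CompleteSpace E] [MeasurableSpace E] [BorelSpace E]
    [SecondCountableTopology E] [IsProbabilityMeasure μ] {M : ℝ} (hM : 0 < M)
    {ν : ℕ → Ω → E} (h0 : ν 0 = 0) (hmeas : ∀ k, Measurable (ν k))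
    (hint : ∀ k, Integrable (ν k) μ) {n : ℕ} (hn : 0 < n)
    (hmart : ∀ k < n, μ[ν (k + 1) | MeasurableSpace.comap (ν k) inferInstance] =ᵐ[μ] ν k)
    (hinc : ∀ k < n, ∀ᵐ ω ∂μ, ‖ν (k + 1) ω - ν k ω‖ ≤ M) {a : ℝ} (ha : 0 < a) :
    μ.real {ω | M * a ≤ ‖ν n ω‖} ≤ 2 * exp (-(a ^ 2 / (2 * n))) := by
  have hn' : (0 : ℝ) < n := Nat.cast_pos.2 hn
  set P := μ.real {ω | M * a ≤ ‖ν n ω‖}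
  set x := a ^ 2 / (2 * n) with hx
  have hmarkov : cosh (a ^ 2 / n) * P ≤ ∫ ω, cosh (a / (n * M) * ‖ν n ω‖) ∂μ := by
    have hscale : a / (n * M) * (M * a) = a ^ 2 / n := by field_simp
    rw [← hscale]
    exact mul_measureReal_le_norm_le_integral_cosh (by positivity) (by positivity)
      (integrable_cosh_mul_norm _ (hint n).aestronglyMeasurable
        (ae_norm_le_mul_of_norm_sub_le h0 hinc))
  have hmoment : ∫ ω, cosh (a / (n * M) * ‖ν n ω‖) ∂μ ≤ cosh (a / n) ^ n := by
    have hscale : a / (n * M) * M = a / n := by field_simp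
    simpa only [hscale] using integral_cosh_norm_le_pow (a / (n * M)) hM h0 hmeas hint hmart hinc
  have hupper : cosh (a / n) ^ n ≤ exp x := by
    refine (pow_le_pow_left₀ (cosh_pos _).le (cosh_le_exp_half_sq _) n).trans_eq ?_
    rw [← exp_nat_mul, hx]
    congr 1
    field_simp
  have hlower : exp x * exp x / 2 ≤ cosh (a ^ 2 / n) := by
    have hxx : x + x = a ^ 2 / n := by rw [hx]; field_simp; ring
    rw [← exp_add, hxx, cosh_eq]
    linarith [exp_pos (-(a ^ 2 / n))]
  have hchain : exp x * exp x / 2 * P ≤ exp x :=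
    calc exp x * exp x / 2 * P ≤ cosh (a ^ 2 / n) * P :=
          mul_le_mul_of_nonneg_right hlower measureReal_nonneg
      _ ≤ exp x := hmarkov.trans (hmoment.trans hupper)
  rw [exp_neg, ← div_eq_mul_inv, le_div_iff₀ (exp_pos x)]
  nlinarith [exp_pos x]

end Martingale

/-- Tail bound for the layer outputs of a stochastic deep neural
network of constant width `p` that form a weak martingale: let `(ν⁽ˡ⁾(X))_{l=0}^{L}`
be Bochner-integrable random vectors in `ℝ^p` with `ν⁽⁰⁾(X) = 0` such that
`E[ν⁽ⁱ⁾(X) | σ(ν⁽ʲ⁾(X))] = ν⁽ʲ⁾(X)` a.s. whenever `j < i ≤ L`, and suppose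
`‖ν⁽ˡ⁾(X) − ν⁽ˡ⁻¹⁾(X)‖₂ ≤ M` almost surely for every `l ∈ {1,…,L}`, with `M > 0`.
Then for every `l ∈ {1,…,L}` and every `a > 0`,
`P(‖ν⁽ˡ⁾(X)‖₂ ≥ M·a) < 2 exp(1 − (a−1)²/(2l))`. -/
theorem weakMartingale_layers_tail_bound
    {Ω : Type*} {mΩ : MeasurableSpace Ω} (μ : Measure Ω) [IsProbabilityMeasure μ]
    {p L : ℕ} (ν : ℕ → Ω → EuclideanSpace ℝ (Fin p))
    (hmeas : ∀ l, Measurable (ν l))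
    (hint : ∀ l, Integrable (ν l) μ)
    (hν0 : ν 0 = 0)
    (hmart : ∀ i j, j < i → i ≤ L →
      μ[ν i|MeasurableSpace.comap (ν j) inferInstance] =ᵐ[μ] ν j)
    (M : ℝ) (hM : 0 < M)
    (hdiff : ∀ l, 1 ≤ l → l ≤ L → ∀ᵐ ω ∂μ, ‖ν l ω - ν (l - 1) ω‖ ≤ M) :
    ∀ l, 1 ≤ l → l ≤ L → ∀ a : ℝ, 0 < a →
      (μ {ω | M * a ≤ ‖ν l ω‖}).toReal < 2 * Real.exp (1 - (a - 1) ^ 2 / (2 * l)) := by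
  intro l hl hlL a ha
  have hl' : (1 : ℝ) ≤ l := Nat.one_le_cast.2 hl
  calc (μ {ω | M * a ≤ ‖ν l ω‖}).toReal ≤ 2 * exp (-(a ^ 2 / (2 * l))) :=
        measureReal_le_norm_le_two_mul_exp hM hν0 hmeas hint hl
          (fun k hk => hmart (k + 1) k k.lt_succ_self (by omega))
          (fun k hk => by simpa using hdiff (k + 1) (by omega) (by omega)) ha
    _ < 2 * exp (1 - (a - 1) ^ 2 / (2 * l)) := by
        gcongr
        rw [neg_lt, neg_sub, sub_lt_iff_lt_add, ← sub_lt_iff_lt_add', div_sub_div_same,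
          div_lt_one (by positivity)]
        nlinarith
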